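/- For any fixed k ∈ {1,2,3}, the set of positive integers n for which n² + k is squarefree has positive lower density; in particular, there exists c > 0 such that #{n ≤ X : n² + k squarefree} ≥ c X for all sufficiently large X. -/

import Mathlib

/-!
Only `n ≡ 2 (mod 4)` are counted: they are a quarter of all `n`, and for them `4 ∤ n² + k`, so
`n² + k` can only fail to be squarefree through an odd prime `p` with `p² ∣ n² + k`.

For `p ≤ X / 128`, `p² ∣ (m - n)(m + n)` and `p² ∤ k` force `p² ∣ m - n` or `p² ∣ m + n` for two
such `m, n`, so these `n` lie in at most two classes modulo `4p²`; summed over odd `p`, using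
`∑ 1/p² ≤ 1/4`, at most `X/8 + X/64` values of `n` are lost.

For `p > X / 128`, `n² + k = b p²` with `b < 128²`. For fixed `b` the solutions of `n² + k = b m²`
grow geometrically (`n'² ≥ (1 + 1/k²) n²` for `n < n'`, as in the theory of Pell equations), so
there are `O(log X)` of them. Thus at least `X/4 - X/8 - X/64 - O(log X) ≥ X/16` values survive.
-/

open Finset Filter Asymptotics

theorem card_le_div_add_one_of_modEq {S : Finset ℕ} {X M : ℕ} (hS : S ⊆ Icc 1 X)
    (h : ∀ a ∈ S, ∀ b ∈ S, a ≡ b [MOD M]) : #S ≤ X / M + 1 := by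
  simpa using card_le_card_of_injOn (t := range (X / M + 1)) (· / M)
    (fun a ha ↦ by
      simpa [Nat.lt_succ_iff] using Nat.div_le_div_right (mem_Icc.1 (hS ha)).2)
    (fun a ha b hb hab ↦ by
      rw [← Nat.div_add_mod a M, ← Nat.div_add_mod b M, show a / M = b / M from hab, h a ha b hb])

theorem card_le_two_mul_of_dvd_sub_or_dvd_add {S : Finset ℕ} {X M : ℕ} (hS : S ⊆ Icc 1 X)
    (h : ∀ a ∈ S, ∀ b ∈ S, (M : ℤ) ∣ a - b ∨ (M : ℤ) ∣ a + b) : #S ≤ 2 * (X / M + 1) := by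
  obtain rfl | ⟨n₀, hn₀⟩ := S.eq_empty_or_nonempty
  · simp
  have hcard (c : ℤ) : #{a ∈ S | (M : ℤ) ∣ ((a : ℕ) : ℤ) + c} ≤ X / M + 1 :=
    card_le_div_add_one_of_modEq ((filter_subset _ _).trans hS) fun a ha b hb ↦
      (Nat.modEq_iff_dvd.2 (by simpa using dvd_sub (mem_filter.1 hb).2 (mem_filter.1 ha).2))
  calc #S ≤ #({a ∈ S | (M : ℤ) ∣ ((a : ℕ) : ℤ) + -n₀} ∪ {a ∈ S | (M : ℤ) ∣ ((a : ℕ) : ℤ) + n₀}) :=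
        card_le_card fun a ha ↦ by
          simpa [ha, ← sub_eq_add_neg] using h a ha n₀ hn₀
    _ ≤ #{a ∈ S | (M : ℤ) ∣ ((a : ℕ) : ℤ) + -n₀} + #{a ∈ S | (M : ℤ) ∣ ((a : ℕ) : ℤ) + n₀} :=
        card_union_le _ _
    _ ≤ 2 * (X / M + 1) := by linarith [hcard (-n₀), hcard n₀]

theorem card_le_log_of_two_mul_le {S : Finset ℕ} {Y : ℕ} (hS : S ⊆ Icc 1 Y)
    (h : ∀ a ∈ S, ∀ b ∈ S, a < b → 2 * a ≤ b) : #S ≤ Nat.log 2 Y + 1 := by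
  have hlog : ∀ a ∈ S, ∀ b ∈ S, a < b → Nat.log 2 a < Nat.log 2 b := fun a ha b hb hab ↦ by
    have ha0 : a ≠ 0 := by have := (mem_Icc.1 (hS ha)).1; omega
    calc Nat.log 2 a < Nat.log 2 (a * 2) := by rw [Nat.log_mul_base one_lt_two ha0]; omega
      _ ≤ Nat.log 2 b := Nat.log_monotone (by linarith [h a ha b hb hab])
  simpa using card_le_card_of_injOn (t := range (Nat.log 2 Y + 1)) (Nat.log 2)
    (fun a ha ↦ by simpa [Nat.lt_succ_iff] using Nat.log_monotone (mem_Icc.1 (hS ha)).2)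
    (fun a ha b hb hab ↦ by
      by_contra hne
      rcases Nat.lt_or_gt_of_ne hne with hlt | hlt
      · exact (hlog a ha b hb hlt).ne hab
      · exact (hlog b hb a ha hlt).ne hab.symm)

theorem sum_inv_sq_le_of_odd {P : Finset ℕ} (hP : ∀ p ∈ P, Odd p ∧ 1 < p) :
    ∑ p ∈ P, (1 : ℝ) / p ^ 2 ≤ 1 / 4 := by
  obtain ⟨N, hN⟩ : ∃ N, P ⊆ (range N).image (fun j : ℕ ↦ 2 * j + 3) := by
    refine ⟨P.sup id, fun p hp ↦ mem_image.2 ?_⟩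
    obtain ⟨⟨j, rfl⟩, h1⟩ := hP p hp
    have : 2 * j + 1 ≤ P.sup id := le_sup (f := id) hp
    exact ⟨j - 1, mem_range.2 (by omega), by omega⟩
  -- `1/(2j+3)^2 ≤ 1/(4(j+1)(j+2))`, which telescopes
  calc ∑ p ∈ P, (1 : ℝ) / p ^ 2
      ≤ ∑ p ∈ (range N).image (fun j : ℕ ↦ 2 * j + 3), (1 : ℝ) / (p : ℝ) ^ 2 :=
        sum_le_sum_of_subset_of_nonneg hN fun _ _ _ ↦ by positivity
    _ = ∑ j ∈ range N, (1 : ℝ) / ((2 * j + 3 : ℕ) : ℝ) ^ 2 :=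
        sum_image fun a _ b _ hab ↦ by omega
    _ ≤ ∑ j ∈ range N, ((1 : ℝ) / (4 * (j + 1)) - 1 / (4 * ((j + 1 : ℕ) + 1))) := by
        gcongr with j
        push_cast
        rw [div_sub_div _ _ (by positivity) (by positivity),
          div_le_div_iff₀ (by positivity) (by positivity)]
        nlinarith
    _ ≤ 1 / 4 := by
        rw [sum_range_sub' (fun j : ℕ ↦ (1 : ℝ) / (4 * (j + 1)))]
        simp only [CharP.cast_eq_zero, zero_add, mul_one]
        linarith [show (0 : ℝ) ≤ 1 / (4 * (N + 1)) by positivity]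

theorem isLittleO_natLog_pow_atTop (b e : ℕ) :
    (fun n : ℕ ↦ (Nat.log b (n ^ e) : ℝ)) =o[atTop] (fun n ↦ (n : ℝ)) := by
  have hlogb : (fun n : ℕ ↦ e * Real.logb b n) =o[atTop] (fun n ↦ (n : ℝ)) :=
    (Real.isLittleO_logb_id_atTop.comp_tendsto tendsto_natCast_atTop_atTop).const_mul_left _
  refine IsBigO.trans_isLittleO (IsBigO.of_bound 1 ?_) hlogb
  filter_upwards with n
  rw [one_mul, Real.norm_of_nonneg (by positivity)]
  calc (Nat.log b (n ^ e) : ℝ) ≤ Real.logb b ((n ^ e : ℕ) : ℝ) := Real.natLog_le_logb _ _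
    _ = e * Real.logb b n := by push_cast; rw [Real.logb_pow]
    _ ≤ ‖e * Real.logb b n‖ := Real.le_norm_self _

theorem sq_dvd_sub_or_sq_dvd_add {R : Type*} [CommRing R] [IsDomain R] {p k m n : R}
    (hp : Prime p) (hp2 : ¬ p ∣ 2) (hk : ¬ p ^ 2 ∣ k)
    (hm : p ^ 2 ∣ m ^ 2 + k) (hn : p ^ 2 ∣ n ^ 2 + k) : p ^ 2 ∣ m - n ∨ p ^ 2 ∣ m + n := by
  have hprod : p ^ 2 ∣ (m - n) * (m + n) := by
    convert dvd_sub hm hn using 1; ring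
  by_cases hsub : p ∣ m - n
  · by_cases hadd : p ∣ m + n
    · -- then `p ∣ 2 m`, so `p ∣ m` and `p ^ 2 ∣ k`
      have hpm : p ∣ m :=
        (hp.dvd_or_dvd (by convert dvd_add hsub hadd using 1; ring)).resolve_left hp2
      exact absurd (by convert dvd_sub hm (pow_dvd_pow_of_dvd hpm 2) using 1; ring) hk
    · exact .inl (hp.pow_dvd_of_dvd_mul_right 2 hadd hprod)
  · exact .inr (hp.pow_dvd_of_dvd_mul_left 2 hsub hprod)

theorem card_filter_sq_dvd_sq_add_le {p k : ℕ} (hp : p.Prime) (hp2 : p ≠ 2) (hk : ¬ p ^ 2 ∣ k)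
    (X : ℕ) : #{n ∈ Icc 1 X | n % 4 = 2 ∧ p ^ 2 ∣ n ^ 2 + k} ≤ 2 * (X / (4 * p ^ 2) + 1) := by
  have hp2' : ¬ (p : ℤ) ∣ 2 := fun h ↦
    hp2 ((Nat.prime_dvd_prime_iff_eq hp Nat.prime_two).1 (by exact_mod_cast h))
  have hcop : IsCoprime (4 : ℤ) ((p : ℤ) ^ 2) := by
    have := (Nat.isCoprime_iff_coprime.2 (Nat.coprime_two_left.2 (hp.odd_of_ne_two hp2))).pow
      (m := 2) (n := 2)
    norm_num at this
    exact this
  refine card_le_two_mul_of_dvd_sub_or_dvd_add (filter_subset _ _) fun a ha b hb ↦ ?_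
  simp only [mem_filter] at ha hb
  have h4 : (4 : ℤ) ∣ a - b ∧ (4 : ℤ) ∣ a + b := by omega
  push_cast
  refine (sq_dvd_sub_or_sq_dvd_add (k := (k : ℤ)) (Nat.prime_iff_prime_int.1 hp) hp2' ?_ ?_ ?_).imp
    (hcop.mul_dvd h4.1) (hcop.mul_dvd h4.2)
  · exact_mod_cast hk
  · exact_mod_cast ha.2.2
  · exact_mod_cast hb.2.2

theorem sq_growth_of_sq_add_eq_mul_sq {b k n n' m m' : ℤ} (hk : 0 < k) (hb : k ^ 2 < 4 * b)
    (hn : 0 < n) (hnn' : n < n') (hm : 0 ≤ m) (hm' : 0 ≤ m')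
    (h : n ^ 2 + k = b * m ^ 2) (h' : n' ^ 2 + k = b * m' ^ 2) :
    (k ^ 2 + 1) * n ^ 2 ≤ k ^ 2 * n' ^ 2 := by
  have hb_pos : 0 < b := by nlinarith
  have hn' : 0 < n' := hn.trans hnn'
  have hsum_nonneg : 0 ≤ n' * m + n * m' := by positivity
  have hfactor : b * (n' * m + n * m') * (n' * m - n * m') = k * (n' ^ 2 - n ^ 2) := by
    linear_combination n ^ 2 * h' - n' ^ 2 * h
  have hdiff : 1 ≤ n' * m - n * m' := by
    have : 0 < b * (n' * m + n * m') * (n' * m - n * m') :=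
      hfactor ▸ mul_pos hk (by nlinarith)
    linarith [pos_of_mul_pos_right this (by positivity)]
  have hsum : b * (n' * m + n * m') ≤ k * n' ^ 2 := by
    nlinarith [mul_nonneg (mul_nonneg hb_pos.le hsum_nonneg) (sub_nonneg.2 hdiff),
      mul_nonneg hk.le (sq_nonneg n)]
  have hprod : n * n' < b * (m * m') := by
    have : (n * n') ^ 2 < (b * (m * m')) ^ 2 := by
      rw [show (b * (m * m')) ^ 2 = (n ^ 2 + k) * (n' ^ 2 + k) by rw [h, h']; ring]
      nlinarith [mul_pos hk (sq_pos_of_pos hn)]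
    exact lt_of_pow_lt_pow_left₀ 2 (by positivity) this
  -- AM-GM: `(b (n'm + nm'))² ≥ 4b · nn' · bmm' ≥ 4b (nn')²`
  have hsq : 4 * b * (n * n') * (n * n') ≤ (k * n' ^ 2) ^ 2 := by
    have h1 : (b * (n' * m + n * m')) ^ 2 ≤ (k * n' ^ 2) ^ 2 :=
      pow_le_pow_left₀ (by positivity) hsum 2
    have h2 : 4 * b * (n * n') * (n * n') ≤ 4 * b * (n * n') * (b * (m * m')) :=
      mul_le_mul_of_nonneg_left hprod.le (by have := mul_pos hn hn'; positivity)
    nlinarith [sq_nonneg (b * (n' * m - n * m'))]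
  have h4b : 4 * b * n ^ 2 ≤ k ^ 2 * n' ^ 2 :=
    le_of_mul_le_mul_right (by linear_combination hsq) (by positivity : 0 < n' ^ 2)
  nlinarith [mul_le_mul_of_nonneg_right (show k ^ 2 + 1 ≤ 4 * b by linarith) (sq_nonneg n)]

theorem sq_lt_four_mul_of_sq_add_eq_mul_sq {k n b m : ℕ} (hk₀ : 0 < k) (hk₃ : k ≤ 3)
    (hn : n % 4 = 2) (h : n ^ 2 + k = b * m ^ 2) : k ^ 2 < 4 * b := by
  by_contra! hb
  have hb2 : b ≤ 2 := by nlinarith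
  interval_cases b
  · rw [zero_mul] at h; omega
  · have hnm : n < m := lt_of_pow_lt_pow_left₀ 2 (Nat.zero_le _) (by omega)
    nlinarith [pow_le_pow_left₀ (Nat.zero_le _) (Nat.succ_le_of_lt hnm) 2, show 2 ≤ n by omega]
  · have := congrArg (· % 2) h
    have hk : k = 3 := by nlinarith
    simp [hk, Nat.add_mod, Nat.pow_mod, show n % 2 = 0 by omega] at this

open scoped Classical in
theorem card_filter_sq_add_eq_mul_sq_le {k : ℕ} (hk₀ : 0 < k) (hk₃ : k ≤ 3) (X b : ℕ) :
    #{n ∈ Icc 1 X | n % 4 = 2 ∧ ∃ m, n ^ 2 + k = b * m ^ 2} ≤ Nat.log 2 (X ^ 14) + 1 := by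
  set S := {n ∈ Icc 1 X | n % 4 = 2 ∧ ∃ m, n ^ 2 + k = b * m ^ 2}
  rw [← card_image_of_injective S (Nat.pow_left_injective (by norm_num : (14 : ℕ) ≠ 0))]
  refine card_le_log_of_two_mul_le (fun a ha ↦ ?_) ?_
  · obtain ⟨n, hn, rfl⟩ := mem_image.1 ha
    obtain ⟨hn1, hnX⟩ := mem_Icc.1 (mem_filter.1 hn).1
    exact mem_Icc.2 ⟨Nat.one_le_pow _ _ hn1, Nat.pow_le_pow_left hnX 14⟩
  simp only [mem_image]
  rintro _ ⟨n, hn, rfl⟩ _ ⟨n', hn', rfl⟩ hlt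
  simp only [S, mem_filter, mem_Icc] at hn hn'
  obtain ⟨⟨hn1, -⟩, hn4, m, hm⟩ := hn
  obtain ⟨-, -, m', hm'⟩ := hn'
  have hgrowth := sq_growth_of_sq_add_eq_mul_sq (b := b) (k := k) (n := n) (n' := n')
    (m := m) (m' := m') (by exact_mod_cast hk₀)
    (by exact_mod_cast sq_lt_four_mul_of_sq_add_eq_mul_sq hk₀ hk₃ hn4 hm)
    (by exact_mod_cast hn1) (by exact_mod_cast lt_of_pow_lt_pow_left₀ 14 (Nat.zero_le _) hlt)
    (by positivity) (by positivity) (by exact_mod_cast hm) (by exact_mod_cast hm')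
  -- `n'² / n² ≥ 1 + 1/k² ≥ 10/9` and `(10/9)⁷ > 2`
  have h10 : 10 * n ^ 2 ≤ 9 * n' ^ 2 := by
    have : ((k : ℤ) ^ 2) * (10 * n ^ 2) ≤ (k ^ 2) * (9 * n' ^ 2) := by
      nlinarith [show (k : ℤ) ^ 2 ≤ 9 by norm_cast; nlinarith]
    exact_mod_cast le_of_mul_le_mul_left this (by positivity)
  have := pow_le_pow_left₀ (Nat.zero_le _) h10 7
  nlinarith

theorem le_four_mul_card_filter_mod_four_eq_two_add_one (X : ℕ) :
    X ≤ 4 * #{n ∈ Icc 1 X | n % 4 = 2} + 1 := by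
  have : (X + 2) / 4 ≤ #{n ∈ Icc 1 X | n % 4 = 2} := by
    simpa using card_le_card_of_injOn (s := range ((X + 2) / 4)) (fun t ↦ 4 * t + 2)
      (fun t ht ↦ by
        simp only [coe_range, Set.mem_Iio, coe_filter, mem_Icc, Set.mem_ofPred_eq] at ht ⊢
        omega)
      (fun a _ b _ hab ↦ by simp only at hab; omega)
  omega

theorem exists_sq_dvd_of_not_squarefree_sq_add {k X n : ℕ} (hk₀ : 0 < k) (hk₃ : k ≤ 3)
    (hnX : n ≤ X) (hn4 : n % 4 = 2) (hsq : ¬ Squarefree (n ^ 2 + k)) :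
    (∃ p ∈ Icc 1 (X / 128), p.Prime ∧ p ≠ 2 ∧ p ^ 2 ∣ n ^ 2 + k) ∨
      ∃ b < 16384, ∃ m, n ^ 2 + k = b * m ^ 2 := by
  obtain ⟨p, hp, hpn⟩ : ∃ p, p.Prime ∧ p ^ 2 ∣ n ^ 2 + k := by
    simpa [Nat.squarefree_iff_prime_squarefree, sq] using hsq
  have hp2 : p ≠ 2 := by
    rintro rfl
    have := Nat.le_of_dvd hk₀
      ((Nat.dvd_add_right (pow_dvd_pow_of_dvd (show 2 ∣ n by omega) 2)).1 hpn)
    omega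
  by_cases hpX : p ≤ X / 128
  · exact .inl ⟨p, mem_Icc.2 ⟨hp.one_le, hpX⟩, hp, hp2, hpn⟩
  obtain ⟨b, hb⟩ := hpn
  refine .inr ⟨b, ?_, p, by rw [hb, mul_comm]⟩
  -- `128 p > X`, so `b p² = n² + k ≤ X² + 3 < (128 p)²`
  have h128 : X + 1 ≤ 128 * p := by omega
  have : b * p ^ 2 < 16384 * p ^ 2 := by
    have : 2 ≤ n := by omega
    nlinarith [Nat.pow_le_pow_left h128 2, Nat.pow_le_pow_left hnX 2]
  exact lt_of_mul_lt_mul_right this (Nat.zero_le _)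

open scoped Classical in
theorem card_filter_not_squarefree_sq_add_le {k : ℕ} (hk₀ : 0 < k) (hk₃ : k ≤ 3) (X : ℕ) :
    #{n ∈ Icc 1 X | n % 4 = 2 ∧ ¬ Squarefree (n ^ 2 + k)} ≤
      ∑ p ∈ Icc 1 (X / 128) with p.Prime ∧ p ≠ 2, #{n ∈ Icc 1 X | n % 4 = 2 ∧ p ^ 2 ∣ n ^ 2 + k} +
      ∑ b ∈ range 16384, #{n ∈ Icc 1 X | n % 4 = 2 ∧ ∃ m, n ^ 2 + k = b * m ^ 2} := by
  refine (card_le_card fun n hn ↦ ?_).trans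
    ((card_union_le _ _).trans (add_le_add card_biUnion_le card_biUnion_le))
  obtain ⟨hnX, hn4, hsq⟩ := mem_filter.1 hn
  rw [mem_union, mem_biUnion, mem_biUnion]
  rcases exists_sq_dvd_of_not_squarefree_sq_add hk₀ hk₃ (mem_Icc.1 hnX).2 hn4 hsq with
    ⟨p, hpX, hp, hp2, hpn⟩ | ⟨b, hb, hbn⟩
  · exact .inl ⟨p, mem_filter.2 ⟨hpX, hp, hp2⟩, mem_filter.2 ⟨hnX, hn4, hpn⟩⟩
  · exact .inr ⟨b, mem_range.2 hb, mem_filter.2 ⟨hnX, hn4, hbn⟩⟩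

theorem sum_card_filter_sq_dvd_sq_add_le {k : ℕ} (hk₀ : 0 < k) (hk₃ : k ≤ 3) (X : ℕ) :
    (∑ p ∈ Icc 1 (X / 128) with p.Prime ∧ p ≠ 2,
      #{n ∈ Icc 1 X | n % 4 = 2 ∧ p ^ 2 ∣ n ^ 2 + k} : ℝ) ≤ X / 8 + X / 64 := by
  set P := {p ∈ Icc 1 (X / 128) | p.Prime ∧ p ≠ 2}
  have hterm : ∀ p ∈ P,
      (#{n ∈ Icc 1 X | n % 4 = 2 ∧ p ^ 2 ∣ n ^ 2 + k} : ℝ) ≤ X / 2 * (1 / p ^ 2) + 2 := by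
    intro p hpP
    obtain ⟨-, hp, hp2⟩ := mem_filter.1 hpP
    have hk : ¬ p ^ 2 ∣ k := fun h ↦ by
      have := Nat.le_of_dvd (by omega) h
      have := hp.two_le
      nlinarith
    calc (#{n ∈ Icc 1 X | n % 4 = 2 ∧ p ^ 2 ∣ n ^ 2 + k} : ℝ)
        ≤ 2 * ((X / (4 * p ^ 2) : ℕ) + 1) := by
          exact_mod_cast card_filter_sq_dvd_sq_add_le hp hp2 hk X
      _ ≤ 2 * (X / (4 * p ^ 2) + 1) := by
          gcongr
          exact Nat.cast_div_le.trans_eq (by push_cast; rfl)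
      _ = X / 2 * (1 / p ^ 2) + 2 := by field_simp; ring
  have hP : (#P : ℝ) ≤ X / 128 := by
    calc (#P : ℝ) ≤ (X / 128 : ℕ) := by exact_mod_cast (card_filter_le _ _).trans (by simp)
      _ ≤ X / 128 := Nat.cast_div_le
  calc (∑ p ∈ P, #{n ∈ Icc 1 X | n % 4 = 2 ∧ p ^ 2 ∣ n ^ 2 + k} : ℝ)
      ≤ ∑ p ∈ P, ((X : ℝ) / 2 * (1 / p ^ 2) + 2) := sum_le_sum hterm
    _ = X / 2 * ∑ p ∈ P, (1 : ℝ) / p ^ 2 + 2 * #P := by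
        rw [sum_add_distrib, mul_sum, sum_const, nsmul_eq_mul, mul_comm]
    _ ≤ X / 2 * (1 / 4) + 2 * (X / 128) := by
        gcongr
        refine sum_inv_sq_le_of_odd fun p hpP ↦ ?_
        obtain ⟨-, hp, hp2⟩ := mem_filter.1 hpP
        exact ⟨hp.odd_of_ne_two hp2, hp.one_lt⟩
    _ = X / 8 + X / 64 := by ring

theorem card_filter_squarefree_sq_add_ge {k : ℕ} (hk₀ : 0 < k) (hk₃ : k ≤ 3) (X : ℕ) :
    7 / 64 * (X : ℝ) - 1 / 4 - 16384 * (Nat.log 2 (X ^ 14) + 1) ≤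
      #{n ∈ Icc 1 X | Squarefree (n ^ 2 + k)} := by
  have hsplit : #{n ∈ Icc 1 X | n % 4 = 2} ≤
      #{n ∈ Icc 1 X | Squarefree (n ^ 2 + k)} +
        #{n ∈ Icc 1 X | n % 4 = 2 ∧ ¬ Squarefree (n ^ 2 + k)} := by
    refine (card_le_card fun n hn ↦ ?_).trans (card_union_le _ _)
    simp only [mem_union, mem_filter] at hn ⊢
    tauto
  have hlarge := sum_le_sum fun b (_ : b ∈ range 16384) ↦
    card_filter_sq_add_eq_mul_sq_le hk₀ hk₃ X b
  rw [sum_const, card_range, smul_eq_mul] at hlarge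
  have hbad := (Nat.cast_le (α := ℝ)).2
    ((card_filter_not_squarefree_sq_add_le hk₀ hk₃ X).trans (add_le_add le_rfl hlarge))
  have hsplit' := (Nat.cast_le (α := ℝ)).2 hsplit
  have hR := (Nat.cast_le (α := ℝ)).2 (le_four_mul_card_filter_mod_four_eq_two_add_one X)
  push_cast at hbad hsplit' hR
  linarith [sum_card_filter_sq_dvd_sq_add_le hk₀ hk₃ X]

theorem squarefree_near_square_positive_lower_density (k : ℕ)
    (hk : k ∈ ({1, 2, 3} : Finset ℕ)) :
    ∃ c : ℝ, 0 < c ∧ ∃ X₀ : ℕ, ∀ X : ℕ, X₀ ≤ X →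
      c * X ≤ (((Finset.Icc 1 X).filter (fun n => Squarefree (n ^ 2 + k))).card : ℝ) := by
  obtain ⟨hk₀, hk₃⟩ : 0 < k ∧ k ≤ 3 := by simp only [mem_insert, mem_singleton] at hk; omega
  have herror : (fun X : ℕ ↦ 16384 * (Nat.log 2 (X ^ 14) + 1 : ℝ) + 1 / 4) =o[atTop]
      (fun X ↦ (X : ℝ)) := by
    have hconst : (fun _ : ℕ ↦ (16384 + 1 / 4 : ℝ)) =o[atTop] (fun X ↦ (X : ℝ)) :=
      isLittleO_const_left.2 <| .inr <| tendsto_norm_atTop_atTop.comp tendsto_natCast_atTop_atTop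
    exact (((isLittleO_natLog_pow_atTop 2 14).const_mul_left 16384).add hconst).congr_left
      fun X ↦ by ring
  obtain ⟨X₀, hX₀⟩ := eventually_atTop.1 (herror.bound (show (0 : ℝ) < 3 / 64 by norm_num))
  refine ⟨1 / 16, by norm_num, X₀, fun X hX ↦ ?_⟩
  have hbound := hX₀ X hX
  rw [Real.norm_of_nonneg (by positivity), Real.norm_of_nonneg (by positivity)] at hbound
  linarith [card_filter_squarefree_sq_add_ge hk₀ hk₃ X]
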